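/- arXiv:1803.02541 — 3 statements merged into one kernel-verified Lean document; each statement's English description precedes it below -/
import Mathlib

section
/- Let A, M, N ∈ ℝ^{n×n} be such that ⟨A⟩ ≤ ⟨M⟩ − |N| (entrywise), where |N| denotes the entrywise absolute value of N. If A is an H-matrix, then M is an H-matrix. -/
open Matrix Filter

noncomputable section

/-- Comparison matrix `⟨A⟩`: `α_ii = |a_ii|`, `α_ij = -|a_ij|` for `i ≠ j`. -/
def cmpMat {n : ℕ} (A : Matrix (Fin n) (Fin n) ℝ) : Matrix (Fin n) (Fin n) ℝ :=
  Matrix.of fun i j => if i = j then |A i j| else -|A i j|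

/-- Entrywise absolute value of a matrix. -/
def absMat {n : ℕ} (A : Matrix (Fin n) (Fin n) ℝ) : Matrix (Fin n) (Fin n) ℝ :=
  Matrix.of fun i j => |A i j|

/-- `A` is an M-matrix: nonpositive off-diagonal entries, nonsingular,
and entrywise nonnegative inverse. -/
def IsMMat {n : ℕ} (A : Matrix (Fin n) (Fin n) ℝ) : Prop :=
  (∀ i j, i ≠ j → A i j ≤ 0) ∧ IsUnit A.det ∧ ∀ i j, 0 ≤ A⁻¹ i j

/-- `A` is an H-matrix: its comparison matrix is an M-matrix. -/
def IsHMat {n : ℕ} (A : Matrix (Fin n) (Fin n) ℝ) : Prop := IsMMat (cmpMat A)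

/-- `A` is an H₊-matrix: an H-matrix with positive diagonal entries. -/
def IsHpMat {n : ℕ} (A : Matrix (Fin n) (Fin n) ℝ) : Prop :=
  IsHMat A ∧ ∀ i, 0 < A i i

/-- Spectral radius of a real matrix: supremum of moduli of its complex eigenvalues. -/
def specRad {n : ℕ} (A : Matrix (Fin n) (Fin n) ℝ) : ℝ :=
  sSup {r : ℝ | ∃ μ : ℂ, μ ∈ spectrum ℂ (A.map Complex.ofReal) ∧ r = ‖μ‖}

/-- Matrix ∞-norm: maximum absolute row sum. -/
def infNorm {n : ℕ} (A : Matrix (Fin n) (Fin n) ℝ) : ℝ :=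
  ⨆ i, ∑ j, |A i j|

/-- `x` solves the linear complementarity problem LCP(A, f):
`x ≥ 0`, `Ax - f ≥ 0`, `xᵀ(Ax - f) = 0`. -/
def SolvesLCP {n : ℕ} (A : Matrix (Fin n) (Fin n) ℝ) (f x : Fin n → ℝ) : Prop :=
  (∀ j, 0 ≤ x j) ∧ (∀ j, f j ≤ (A *ᵥ x) j) ∧ ∑ j, x j * ((A *ᵥ x) j - f j) = 0

end

/-!
The vector `x = ⟨A⟩⁻¹ 𝟙` is nonnegative, and `⟨A⟩ ≤ ⟨M⟩` entrywise gives `⟨M⟩ x ≥ ⟨A⟩ x = 𝟙`.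
A Z-matrix `C` admitting such an `x ≥ 0` with `C x > 0` is an M-matrix: `x` is then positive, and
`C z ≥ 0` forces `z ≥ 0` (otherwise `z - t x ≥ 0`, for the least admissible `t < 0`, vanishes at
some `k`, where the sign pattern makes `(C (z - t x))_k ≤ 0 < (C z)_k - t (C x)_k`). This
monotonicity of `C` gives both its invertibility and `C⁻¹ ≥ 0`.
-/

section ZMatrix

variable {ι 𝕜 : Type*} [Fintype ι]

section OrderedSemiring

variable [Semiring 𝕜] [PartialOrder 𝕜] [IsOrderedRing 𝕜] {C : Matrix ι ι 𝕜}

theorem Matrix.mulVec_le_mulVec_of_le {B : Matrix ι ι 𝕜} (hBC : ∀ i j, B i j ≤ C i j)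
    {x : ι → 𝕜} (hx : ∀ j, 0 ≤ x j) (i : ι) : (B *ᵥ x) i ≤ (C *ᵥ x) i :=
  Finset.sum_le_sum fun j _ => mul_le_mul_of_nonneg_right (hBC i j) (hx j)

theorem Matrix.mulVec_apply_nonpos_of_apply_eq_zero (hZ : ∀ i j, i ≠ j → C i j ≤ 0)
    {w : ι → 𝕜} (hw : ∀ j, 0 ≤ w j) {k : ι} (hwk : w k = 0) : (C *ᵥ w) k ≤ 0 := by
  refine Finset.sum_nonpos fun j _ => ?_
  rcases eq_or_ne k j with rfl | hkj
  · simp [hwk]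
  · exact mul_nonpos_of_nonpos_of_nonneg (hZ k j hkj) (hw j)

theorem Matrix.pos_of_mulVec_pos (hZ : ∀ i j, i ≠ j → C i j ≤ 0) {x : ι → 𝕜}
    (hx : ∀ i, 0 ≤ x i) (hCx : ∀ i, 0 < (C *ᵥ x) i) (i : ι) : 0 < x i :=
  (hx i).lt_of_ne' fun hxi =>
    (hCx i).not_ge (mulVec_apply_nonpos_of_apply_eq_zero hZ hx hxi)

end OrderedSemiring

theorem Matrix.nonneg_of_mulVec_nonneg [Field 𝕜] [LinearOrder 𝕜] [IsStrictOrderedRing 𝕜]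
    {C : Matrix ι ι 𝕜} (hZ : ∀ i j, i ≠ j → C i j ≤ 0) {x : ι → 𝕜} (hx : ∀ i, 0 < x i)
    (hCx : ∀ i, 0 < (C *ᵥ x) i) {z : ι → 𝕜} (hCz : ∀ i, 0 ≤ (C *ᵥ z) i) (i : ι) : 0 ≤ z i := by
  by_contra! hzi
  obtain ⟨k, -, hk⟩ :=
    Finset.univ.exists_min_image (fun j => z j / x j) ⟨i, Finset.mem_univ i⟩
  set t := z k / x k
  have ht : t < 0 := (hk i (Finset.mem_univ i)).trans_lt (div_neg_of_neg_of_pos hzi (hx i))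
  have hw : ∀ j, 0 ≤ (z - t • x) j := fun j => by
    have := (le_div_iff₀ (hx j)).mp (hk j (Finset.mem_univ j))
    simp only [Pi.sub_apply, Pi.smul_apply, smul_eq_mul]
    linarith
  have hwk : (z - t • x) k = 0 := by simp [t, (hx k).ne']
  have hCw : 0 < (C *ᵥ (z - t • x)) k := by
    rw [mulVec_sub, mulVec_smul, Pi.sub_apply, Pi.smul_apply, smul_eq_mul]
    nlinarith [hCz k, hCx k]
  exact hCw.not_ge (mulVec_apply_nonpos_of_apply_eq_zero hZ hw hwk)

end ZMatrix

theorem isMMat_of_mulVec_pos {n : ℕ} {C : Matrix (Fin n) (Fin n) ℝ}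
    (hZ : ∀ i j, i ≠ j → C i j ≤ 0) {x : Fin n → ℝ} (hx : ∀ i, 0 ≤ x i)
    (hCx : ∀ i, 0 < (C *ᵥ x) i) : IsMMat C := by
  have hx' := pos_of_mulVec_pos hZ hx hCx
  have hdet : IsUnit C.det := by
    refine isUnit_iff_ne_zero.mpr fun h0 => ?_
    obtain ⟨v, hv0, hCv⟩ := exists_mulVec_eq_zero_iff.mpr h0
    refine hv0 (funext fun i => le_antisymm ?_ ?_)
    · simpa using nonneg_of_mulVec_nonneg hZ hx' hCx (z := -v) (by simp [mulVec_neg, hCv]) i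
    · exact nonneg_of_mulVec_nonneg hZ hx' hCx (by simp [hCv]) i
  refine ⟨hZ, hdet, fun i j => ?_⟩
  have hcol : C *ᵥ (C⁻¹ *ᵥ Pi.single j 1) = Pi.single j 1 := by
    rw [mulVec_mulVec, mul_nonsing_inv C hdet, one_mulVec]
  have := nonneg_of_mulVec_nonneg hZ hx' hCx (z := C⁻¹ *ᵥ Pi.single j 1)
    (fun k => by rw [hcol]; exact Pi.single_nonneg (α := fun _ => ℝ).mpr zero_le_one k) i
  simpa [mulVec_single_one] using this

theorem IsMMat.exists_nonneg_mulVec_pos {n : ℕ} {B : Matrix (Fin n) (Fin n) ℝ}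
    (hB : IsMMat B) : ∃ x : Fin n → ℝ, (∀ i, 0 ≤ x i) ∧ ∀ i, 0 < (B *ᵥ x) i := by
  obtain ⟨-, hdet, hinv⟩ := hB
  refine ⟨B⁻¹ *ᵥ fun _ => 1, fun i => ?_, fun i => ?_⟩
  · simp only [mulVec, dotProduct, mul_one]
    exact Finset.sum_nonneg fun j _ => hinv i j
  · simp [mulVec_mulVec, mul_nonsing_inv B hdet]

theorem cmpMat_nonpos_of_ne {n : ℕ} (A : Matrix (Fin n) (Fin n) ℝ) {i j : Fin n}
    (hij : i ≠ j) : cmpMat A i j ≤ 0 := by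
  simp [cmpMat, hij]

/-- Lemma 2.2: if `⟨A⟩ ≤ ⟨M⟩ - |N|` entrywise and `A` is an H-matrix,
then `M` is an H-matrix. -/
theorem isHMat_of_cmp_le_sub {n : ℕ} (A M N : Matrix (Fin n) (Fin n) ℝ)
    (hle : ∀ i j, cmpMat A i j ≤ cmpMat M i j - absMat N i j)
    (hA : IsHMat A) : IsHMat M := by
  have hcmp : ∀ i j, cmpMat A i j ≤ cmpMat M i j := fun i j => by
    have := hle i j
    simp only [absMat, of_apply] at this
    linarith [abs_nonneg (N i j)]
  obtain ⟨x, hx, hAx⟩ := IsMMat.exists_nonneg_mulVec_pos hA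
  exact isMMat_of_mulVec_pos (fun i j => cmpMat_nonpos_of_ne M) hx fun i =>
    (hAx i).trans_le (mulVec_le_mulVec_of_le hcmp hx i)
end

section
/- Let A, M, N ∈ ℝ^{n×n} be such that ⟨A⟩ ≤ ⟨M⟩ − |N| (entrywise). If A is an H-matrix, then the spectral radius satisfies ρ(⟨M⟩⁻¹|N|) < 1. -/
open Matrix Filter

/-!
If `⟨M⟩⁻¹|N| v = μ v` with `v ≠ 0` and `|μ| ≥ 1`, then `|N| v = μ ⟨M⟩ v`, and taking moduli
entrywise (reverse triangle inequality on the left) gives `⟨M⟩ |v| ≤ |N| |v|`. Hence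
`⟨A⟩ |v| ≤ (⟨M⟩ - |N|) |v| ≤ 0`, and since `⟨A⟩⁻¹ ≥ 0` this forces `|v| ≤ 0`, i.e. `v = 0`.
-/

open Module.End

theorem Matrix.exists_mulVec_eq_smul_of_mem_spectrum {ι K : Type*} [Fintype ι] [DecidableEq ι]
    [Field K] {B : Matrix ι ι K} {μ : K} (h : μ ∈ spectrum K B) :
    ∃ v : ι → K, v ≠ 0 ∧ B *ᵥ v = μ • v := by
  rw [← Matrix.spectrum_toLin', ← hasEigenvalue_iff_mem_spectrum] at h
  obtain ⟨v, hv⟩ := h.exists_hasEigenvector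
  exact ⟨v, hv.2, by rw [← Matrix.toLin'_apply]; exact hv.apply_eq_smul⟩

open Matrix

section

variable {n : ℕ}

@[simp]
theorem cmpMat_cmpMat (B : Matrix (Fin n) (Fin n) ℝ) : cmpMat (cmpMat B) = cmpMat B := by
  ext i j
  by_cases h : i = j <;> simp [cmpMat, h]

@[simp]
theorem absMat_absMat (B : Matrix (Fin n) (Fin n) ℝ) : absMat (absMat B) = absMat B := by
  ext i j
  simp [absMat]

theorem cmpMat_mulVec_norm_le (B : Matrix (Fin n) (Fin n) ℝ) (v : Fin n → ℂ) (i : Fin n) :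
    (cmpMat B *ᵥ fun j => ‖v j‖) i ≤ ‖(B.map Complex.ofReal *ᵥ v) i‖ := by
  have hoff : ∑ j ∈ Finset.univ.erase i, cmpMat B i j * ‖v j‖
      = -∑ j ∈ Finset.univ.erase i, ‖(B i j : ℂ) * v j‖ := by
    rw [← Finset.sum_neg_distrib]
    refine Finset.sum_congr rfl fun j hj => ?_
    simp [cmpMat, Ne.symm (Finset.ne_of_mem_erase hj)]
  calc (cmpMat B *ᵥ fun j => ‖v j‖) i
      = ‖(B i i : ℂ) * v i‖ - ∑ j ∈ Finset.univ.erase i, ‖(B i j : ℂ) * v j‖ := by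
        rw [mulVec, dotProduct, ← Finset.add_sum_erase _ _ (Finset.mem_univ i), hoff]
        simp [cmpMat, sub_eq_add_neg]
    _ ≤ ‖(B i i : ℂ) * v i‖ - ‖∑ j ∈ Finset.univ.erase i, (B i j : ℂ) * v j‖ := by
        gcongr; exact norm_sum_le _ _
    _ ≤ ‖(B i i : ℂ) * v i + ∑ j ∈ Finset.univ.erase i, (B i j : ℂ) * v j‖ :=
        norm_sub_le_norm_add _ _
    _ = ‖(B.map Complex.ofReal *ᵥ v) i‖ := by
        rw [Finset.add_sum_erase _ (fun j => (B i j : ℂ) * v j) (Finset.mem_univ i)]; rfl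

theorem norm_mulVec_le_absMat_mulVec_norm (B : Matrix (Fin n) (Fin n) ℝ) (v : Fin n → ℂ)
    (i : Fin n) : ‖(B.map Complex.ofReal *ᵥ v) i‖ ≤ (absMat B *ᵥ fun j => ‖v j‖) i := by
  rw [mulVec, dotProduct]
  refine (norm_sum_le _ _).trans (Finset.sum_le_sum fun j _ => ?_)
  simp [absMat]

theorem IsMMat.nonpos_of_mulVec_nonpos {P : Matrix (Fin n) (Fin n) ℝ} (hP : IsMMat P)
    {w : Fin n → ℝ} (hw : ∀ i, (P *ᵥ w) i ≤ 0) (i : Fin n) : w i ≤ 0 := by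
  obtain ⟨-, hdet, hinv⟩ := hP
  rw [← one_mulVec w, ← nonsing_inv_mul P hdet, ← mulVec_mulVec, mulVec, dotProduct]
  exact Finset.sum_nonpos fun j _ => mul_nonpos_of_nonneg_of_nonpos (hinv i j) (hw j)

theorem specRad_lt_of_forall_norm_lt (B : Matrix (Fin n) (Fin n) ℝ) {r : ℝ} (hr : 0 < r)
    (h : ∀ μ ∈ spectrum ℂ (B.map Complex.ofReal), ‖μ‖ < r) : specRad B < r := by
  have hS : {s : ℝ | ∃ μ : ℂ, μ ∈ spectrum ℂ (B.map Complex.ofReal) ∧ s = ‖μ‖}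
      = (‖·‖) '' spectrum ℂ (B.map Complex.ofReal) := by
    ext s; simp [eq_comm]
  rw [specRad, hS]
  rcases (spectrum ℂ (B.map Complex.ofReal)).eq_empty_or_nonempty with h0 | hne
  · simpa [h0] using hr
  · rw [((Matrix.finite_spectrum _).image _).csSup_lt_iff (hne.image _)]
    rintro _ ⟨μ, hμ, rfl⟩
    exact h μ hμ

theorem cmpMat_mulVec_norm_le_absMat_mulVec_norm {M N : Matrix (Fin n) (Fin n) ℝ}
    {v : Fin n → ℂ} {μ : ℂ} (hμ : 1 ≤ ‖μ‖)
    (h : (absMat N).map Complex.ofReal *ᵥ v = μ • ((cmpMat M).map Complex.ofReal *ᵥ v))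
    (i : Fin n) : (cmpMat M *ᵥ fun j => ‖v j‖) i ≤ (absMat N *ᵥ fun j => ‖v j‖) i :=
  calc (cmpMat M *ᵥ fun j => ‖v j‖) i
      = (cmpMat (cmpMat M) *ᵥ fun j => ‖v j‖) i := by rw [cmpMat_cmpMat]
    _ ≤ ‖((cmpMat M).map Complex.ofReal *ᵥ v) i‖ := cmpMat_mulVec_norm_le _ _ _
    _ ≤ ‖μ‖ * ‖((cmpMat M).map Complex.ofReal *ᵥ v) i‖ :=
        le_mul_of_one_le_left (norm_nonneg _) hμ
    _ = ‖((absMat N).map Complex.ofReal *ᵥ v) i‖ := by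
        rw [h, Pi.smul_apply, smul_eq_mul, norm_mul]
    _ ≤ (absMat (absMat N) *ᵥ fun j => ‖v j‖) i := norm_mulVec_le_absMat_mulVec_norm _ _ _
    _ = (absMat N *ᵥ fun j => ‖v j‖) i := by rw [absMat_absMat]

theorem norm_lt_one_of_mem_spectrum_cmpInv_mul_abs {A M N : Matrix (Fin n) (Fin n) ℝ}
    (hle : ∀ i j, cmpMat A i j ≤ cmpMat M i j - absMat N i j) (hA : IsHMat A) {μ : ℂ}
    (hμ : μ ∈ spectrum ℂ (((cmpMat M)⁻¹ * absMat N).map Complex.ofReal)) : ‖μ‖ < 1 := by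
  obtain ⟨v, hv0, hv⟩ := exists_mulVec_eq_smul_of_mem_spectrum hμ
  by_contra! hμ1
  apply hv0
  by_cases hM : IsUnit (cmpMat M).det
  swap
  · -- `(cmpMat M)⁻¹` is the junk value `0` here, so `μ • v = 0`.
    have : μ • v = 0 := by simpa [nonsing_inv_apply_not_isUnit _ hM] using hv.symm
    exact (smul_eq_zero.mp this).resolve_left (by rintro rfl; norm_num at hμ1)
  have hMT : (cmpMat M).map Complex.ofReal * ((cmpMat M)⁻¹ * absMat N).map Complex.ofReal
      = (absMat N).map Complex.ofReal :=
    calc _ = (cmpMat M * ((cmpMat M)⁻¹ * absMat N)).map Complex.ofReal :=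
          (Matrix.map_mul (f := Complex.ofRealHom)).symm
      _ = _ := by rw [← mul_assoc, mul_nonsing_inv _ hM, one_mul]
  have heq : (absMat N).map Complex.ofReal *ᵥ v
      = μ • ((cmpMat M).map Complex.ofReal *ᵥ v) := by
    rw [← mulVec_smul, ← hv, mulVec_mulVec, hMT]
  have hAw : ∀ i, (cmpMat A *ᵥ fun j => ‖v j‖) i ≤ 0 := fun i =>
    calc (cmpMat A *ᵥ fun j => ‖v j‖) i
        ≤ ((cmpMat M - absMat N) *ᵥ fun j => ‖v j‖) i := by
          rw [mulVec, mulVec, dotProduct, dotProduct]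
          exact Finset.sum_le_sum fun j _ => mul_le_mul_of_nonneg_right (hle i j) (norm_nonneg _)
      _ = (cmpMat M *ᵥ fun j => ‖v j‖) i - (absMat N *ᵥ fun j => ‖v j‖) i := by
          rw [sub_mulVec]; rfl
      _ ≤ 0 := sub_nonpos.2 (cmpMat_mulVec_norm_le_absMat_mulVec_norm hμ1 heq i)
  funext j
  exact norm_le_zero_iff.mp (IsMMat.nonpos_of_mulVec_nonpos hA hAw j)

end

/-- Lemma 2.4: if `⟨A⟩ ≤ ⟨M⟩ - |N|` entrywise and `A` is an H-matrix,
then `ρ(⟨M⟩⁻¹ |N|) < 1`. -/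
theorem specRad_cmpInv_mul_abs_lt_one {n : ℕ} (A M N : Matrix (Fin n) (Fin n) ℝ)
    (hle : ∀ i j, cmpMat A i j ≤ cmpMat M i j - absMat N i j)
    (hA : IsHMat A) :
    specRad ((cmpMat M)⁻¹ * absMat N) < 1 :=
  specRad_lt_of_forall_norm_lt _ one_pos fun _ hμ =>
    norm_lt_one_of_mem_spectrum_cmpInv_mul_abs hle hA hμ
end

section
/- Let A ∈ ℝ^{n×n} be an H₊-matrix, let A = M − N be a splitting with ⟨A⟩ ≤ ⟨M⟩ − |N| (entrywise), and let x* ∈ ℝⁿ be a solution of LCP(A, f), i.e. x* ≥ 0, Ax* − f ≥ 0, (x*)ᵀ(Ax* − f) = 0. Let x⁰ ∈ ℝⁿ, and let the sequence y⁰, y¹, …, yˢ be defined by y⁰ = x⁰ and, for j = 1, …, s, yʲ is a solution of LCP(M, f + N yʲ⁻¹), i.e. yʲ ≥ 0, M yʲ − (f + N yʲ⁻¹) ≥ 0, (yʲ)ᵀ(M yʲ − f − N yʲ⁻¹) = 0. Then |yˢ − x*| ≤ (⟨M⟩⁻¹|N|)ˢ |x⁰ − x*| componentwise. -/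
open Matrix Filter

/-! Where `w i > x* i`, complementarity makes row `i` of LCP(M, f + N z) an equation at `w` while
row `i` of LCP(A, f) is an inequality at `x*`; with `A = M - N` this gives
`(M (w - x*)) i ≤ (N (z - x*)) i`, and symmetrically where `w i < x* i`. As `M` has positive
diagonal, the sign of `w - x*` turns these into `⟨M⟩ |w - x*| ≤ |N| |z - x*|`. Finally `⟨M⟩` is a
Z-matrix dominating the M-matrix `⟨A⟩`, hence an M-matrix, so `⟨M⟩⁻¹ ≥ 0` gives
`|w - x*| ≤ ⟨M⟩⁻¹ |N| |z - x*|`, which is iterated `s` times. -/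

namespace Matrix

variable {ι : Type*} [Fintype ι]

theorem mulVec_le_mulVec_of_nonneg {m : Type*} {C : Matrix m ι ℝ} (hC : ∀ i j, 0 ≤ C i j)
    {p q : ι → ℝ} (h : p ≤ q) : C *ᵥ p ≤ C *ᵥ q :=
  fun i => dotProduct_le_dotProduct_of_nonneg_left h (hC i)

theorem mul_apply_nonneg {C D : Matrix ι ι ℝ} (hC : ∀ i j, 0 ≤ C i j) (hD : ∀ i j, 0 ≤ D i j)
    (i j : ι) : 0 ≤ (C * D) i j :=
  Finset.sum_nonneg fun k _ => mul_nonneg (hC i k) (hD k j)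

theorem nonneg_of_nonneg_mulVec {C : Matrix ι ι ℝ} (hZ : ∀ i j, i ≠ j → C i j ≤ 0)
    {u : ι → ℝ} (hu : ∀ i, 0 < u i) (hCu : ∀ i, 0 < (C *ᵥ u) i)
    {x : ι → ℝ} (hx : 0 ≤ C *ᵥ x) : 0 ≤ x := by
  intro i
  -- `t u` is the largest multiple of `u` below `x`; it touches `x` at `i₀`.
  obtain ⟨i₀, -, hmin⟩ := Finset.exists_min_image Finset.univ (fun j => x j / u j)
    ⟨i, Finset.mem_univ i⟩
  set t := x i₀ / u i₀
  have htu : ∀ j, t * u j ≤ x j := fun j => (le_div_iff₀ (hu j)).mp (hmin j (Finset.mem_univ j))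
  have hx₀ : x i₀ = t * u i₀ := (div_mul_cancel₀ _ (hu i₀).ne').symm
  have hCx : (C *ᵥ x) i₀ ≤ t * (C *ᵥ u) i₀ := by
    simp only [mulVec, dotProduct, Finset.mul_sum]
    refine Finset.sum_le_sum fun j _ => ?_
    rcases eq_or_ne j i₀ with rfl | hj
    · rw [hx₀, mul_left_comm]
    · nlinarith [hZ i₀ j hj.symm, htu j]
  have ht : 0 ≤ t := nonneg_of_mul_nonneg_left ((hx i₀).trans hCx) (hCu i₀)
  exact (mul_nonneg ht (hu i).le).trans (htu i)

variable [DecidableEq ι]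

theorem isUnit_det_of_monotone {C : Matrix ι ι ℝ} (hC : ∀ x, 0 ≤ C *ᵥ x → 0 ≤ x) :
    IsUnit C.det := by
  rw [isUnit_iff_ne_zero]
  intro hdet
  obtain ⟨v, hv, hCv⟩ := exists_mulVec_eq_zero_iff.mpr hdet
  have hpos : 0 ≤ v := hC v hCv.ge
  have hneg : 0 ≤ -v := hC (-v) (by rw [mulVec_neg, hCv, neg_zero])
  exact hv (le_antisymm (neg_nonneg.mp hneg) hpos)

theorem inv_apply_nonneg_of_monotone {C : Matrix ι ι ℝ} (hC : ∀ x, 0 ≤ C *ᵥ x → 0 ≤ x)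
    (i j : ι) : 0 ≤ C⁻¹ i j := by
  have hcol : 0 ≤ C⁻¹ *ᵥ Pi.single j 1 := by
    apply hC
    rw [mulVec_mulVec, mul_nonsing_inv _ (isUnit_det_of_monotone hC), one_mulVec]
    exact Pi.single_nonneg.mpr zero_le_one
  simpa [mulVec_single_one] using hcol i

theorem le_inv_mul_mulVec_of_mulVec_le {C N : Matrix ι ι ℝ} (hC : IsUnit C.det)
    (hCinv : ∀ i j, 0 ≤ C⁻¹ i j) {v w : ι → ℝ} (h : C *ᵥ v ≤ N *ᵥ w) :
    v ≤ (C⁻¹ * N) *ᵥ w := by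
  calc v = C⁻¹ *ᵥ (C *ᵥ v) := by rw [mulVec_mulVec, nonsing_inv_mul _ hC, one_mulVec]
    _ ≤ C⁻¹ *ᵥ (N *ᵥ w) := mulVec_le_mulVec_of_nonneg hCinv h
    _ = (C⁻¹ * N) *ᵥ w := mulVec_mulVec _ _ _

theorem le_pow_mulVec_of_le_mulVec {P : Matrix ι ι ℝ} (hP : ∀ i j, 0 ≤ P i j)
    {e : ℕ → ι → ℝ} {s : ℕ} (h : ∀ k < s, e (k + 1) ≤ P *ᵥ e k) :
    e s ≤ (P ^ s) *ᵥ e 0 := by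
  induction s with
  | zero => simp
  | succ s ih =>
    calc e (s + 1) ≤ P *ᵥ e s := h s s.lt_succ_self
      _ ≤ P *ᵥ ((P ^ s) *ᵥ e 0) :=
          mulVec_le_mulVec_of_nonneg hP (ih fun k hk => h k (hk.trans s.lt_succ_self))
      _ = (P ^ (s + 1)) *ᵥ e 0 := by rw [mulVec_mulVec, pow_succ']

end Matrix

section ComparisonMatrix

variable {n : ℕ}

theorem IsMMat.inv_mulVec_one_pos {B : Matrix (Fin n) (Fin n) ℝ} (hB : IsMMat B) (i : Fin n) :
    0 < (B⁻¹ *ᵥ fun _ => 1) i := by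
  obtain ⟨-, hdet, hinv⟩ := hB
  have hnonneg : ∀ j ∈ Finset.univ, 0 ≤ B⁻¹ i j * 1 := fun j _ => by simpa using hinv i j
  refine (Finset.sum_nonneg hnonneg).lt_of_ne fun hzero => ?_
  -- a zero row of `B⁻¹` would contradict `B⁻¹ * B = 1`
  have hrow : ∀ j, B⁻¹ i j = 0 := fun j => by
    simpa using (Finset.sum_eq_zero_iff_of_nonneg hnonneg).mp hzero.symm j (Finset.mem_univ j)
  have hone : (B⁻¹ * B) i i = 1 := by rw [nonsing_inv_mul _ hdet, one_apply_eq]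
  simp [mul_apply, hrow] at hone

theorem IsMMat.of_le {B C : Matrix (Fin n) (Fin n) ℝ} (hB : IsMMat B)
    (hZ : ∀ i j, i ≠ j → C i j ≤ 0) (hBC : ∀ i j, B i j ≤ C i j) : IsMMat C := by
  set u : Fin n → ℝ := B⁻¹ *ᵥ fun _ => 1
  have hu : ∀ i, 0 < u i := hB.inv_mulVec_one_pos
  have hBu : B *ᵥ u = fun _ => 1 := by
    rw [mulVec_mulVec, mul_nonsing_inv _ hB.2.1, one_mulVec]
  have hCu : ∀ i, 0 < (C *ᵥ u) i := fun i => by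
    have hle : (B *ᵥ u) i ≤ (C *ᵥ u) i :=
      dotProduct_le_dotProduct_of_nonneg_right (hBC i) fun j => (hu j).le
    rw [hBu] at hle
    linarith
  have hmono : ∀ x, 0 ≤ C *ᵥ x → 0 ≤ x := fun x => nonneg_of_nonneg_mulVec hZ hu hCu
  exact ⟨hZ, isUnit_det_of_monotone hmono, inv_apply_nonneg_of_monotone hmono⟩

theorem cmpMat_apply_nonpos {M : Matrix (Fin n) (Fin n) ℝ} {i j : Fin n} (hij : i ≠ j) :
    cmpMat M i j ≤ 0 := by
  simp [cmpMat, hij]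

theorem IsHMat.of_cmpMat_le_sub_absMat {A M N : Matrix (Fin n) (Fin n) ℝ} (hA : IsHMat A)
    (hcmp : ∀ i j, cmpMat A i j ≤ cmpMat M i j - absMat N i j) : IsHMat M :=
  IsMMat.of_le hA (fun _ _ => cmpMat_apply_nonpos) fun i j => by
    linarith [hcmp i j, abs_nonneg (N i j), show absMat N i j = |N i j| from rfl]

theorem diag_pos_of_cmpMat_le_sub_absMat {A M N : Matrix (Fin n) (Fin n) ℝ}
    (hsplit : A = M - N) (hA : ∀ i, 0 < A i i)
    (hcmp : ∀ i j, cmpMat A i j ≤ cmpMat M i j - absMat N i j) (i : Fin n) : 0 < M i i := by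
  have h := hcmp i i
  simp only [cmpMat, absMat, of_apply, ↓reduceIte] at h
  have hN : N i i = M i i - A i i := by rw [hsplit, Matrix.sub_apply]; ring
  rw [hN, abs_of_pos (hA i)] at h
  by_contra! hM
  rw [abs_of_nonpos hM, abs_of_nonpos (by linarith [hA i])] at h
  linarith [hA i]

theorem cmpMat_mulVec_abs_le {M : Matrix (Fin n) (Fin n) ℝ} {i : Fin n} (hM : 0 ≤ M i i)
    (d : Fin n → ℝ) {c : ℝ} (hc : |c| = 1) (hcd : 0 ≤ c * d i) :
    (cmpMat M *ᵥ |d|) i ≤ c * (M *ᵥ d) i := by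
  simp only [mulVec, dotProduct, Finset.mul_sum, cmpMat, of_apply, Pi.abs_apply]
  refine Finset.sum_le_sum fun j _ => ?_
  by_cases hij : i = j
  · subst hij
    rw [if_pos rfl, abs_of_nonneg hM, ← one_mul |d i|, ← hc, ← abs_mul, abs_of_nonneg hcd,
      mul_left_comm]
  · rw [if_neg hij]
    calc -|M i j| * |d j| = -|c * (M i j * d j)| := by rw [abs_mul, abs_mul, hc]; ring
      _ ≤ c * (M i j * d j) := neg_abs_le _

theorem abs_mulVec_apply_le (N : Matrix (Fin n) (Fin n) ℝ) (e : Fin n → ℝ) (i : Fin n) :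
    |(N *ᵥ e) i| ≤ (absMat N *ᵥ |e|) i := by
  simpa [mulVec, dotProduct, absMat, abs_mul] using
    Finset.abs_sum_le_sum_abs (fun j => N i j * e j) Finset.univ

end ComparisonMatrix

section LCP

variable {n : ℕ}

theorem SolvesLCP.mulVec_apply_eq_of_pos {A : Matrix (Fin n) (Fin n) ℝ} {f x : Fin n → ℝ}
    (hx : SolvesLCP A f x) {i : Fin n} (hi : 0 < x i) : (A *ᵥ x) i = f i := by
  have hterm : ∀ j ∈ Finset.univ, 0 ≤ x j * ((A *ᵥ x) j - f j) := fun j _ =>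
    mul_nonneg (hx.1 j) (sub_nonneg.mpr (hx.2.1 j))
  have hzero := (Finset.sum_eq_zero_iff_of_nonneg hterm).mp hx.2.2 i (Finset.mem_univ i)
  linarith [(mul_eq_zero.mp hzero).resolve_left hi.ne']

theorem SolvesLCP.residual_le_of_lt {A B : Matrix (Fin n) (Fin n) ℝ} {f g x w : Fin n → ℝ}
    (hx : SolvesLCP A f x) (hw : SolvesLCP B g w) {i : Fin n} (hlt : x i < w i) :
    (B *ᵥ w) i - g i ≤ (A *ᵥ x) i - f i := by
  rw [hw.mulVec_apply_eq_of_pos ((hx.1 i).trans_lt hlt), sub_self, sub_nonneg]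
  exact hx.2.1 i

theorem cmpMat_mulVec_abs_sub_le {A M N : Matrix (Fin n) (Fin n) ℝ} {f x z w : Fin n → ℝ}
    (hsplit : A = M - N) (hM : ∀ i, 0 ≤ M i i) (hx : SolvesLCP A f x)
    (hw : SolvesLCP M (f + N *ᵥ z) w) :
    cmpMat M *ᵥ |w - x| ≤ absMat N *ᵥ |z - x| := by
  intro i
  have hres : ((M *ᵥ w) i - (f + N *ᵥ z) i) - ((A *ᵥ x) i - f i) =
      (M *ᵥ (w - x)) i - (N *ᵥ (z - x)) i := by
    simp only [hsplit, sub_mulVec, mulVec_sub, Pi.sub_apply, Pi.add_apply]; ring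
  have hNe := abs_mulVec_apply_le N (z - x) i
  rcases lt_trichotomy (x i) (w i) with hlt | heq | hgt
  · have hresid := hx.residual_le_of_lt hw hlt
    have hcmpM := cmpMat_mulVec_abs_le (hM i) (w - x) abs_one (by simpa using hlt.le)
    linarith [le_abs_self ((N *ᵥ (z - x)) i)]
  · -- with `w i = x i` both signs are admissible, so the left side is `≤ 0`
    have h₁ := cmpMat_mulVec_abs_le (hM i) (w - x) abs_one (by simp [heq])
    have h₂ := cmpMat_mulVec_abs_le (hM i) (w - x) (c := -1) (by simp) (by simp [heq])
    linarith [abs_nonneg ((N *ᵥ (z - x)) i)]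
  · have hresid := hw.residual_le_of_lt hx hgt
    have hcmpM := cmpMat_mulVec_abs_le (hM i) (w - x) (c := -1) (by simp) (by simpa using hgt.le)
    linarith [neg_abs_le ((N *ᵥ (z - x)) i)]

end LCP

/-- Lemma 2.6: error estimate for the inner iteration. If `A` is an H₊-matrix,
`A = M - N` with `⟨A⟩ ≤ ⟨M⟩ - |N|`, `x*` solves LCP(A, f), `y 0 = x⁰` and
`y j` solves LCP(M, f + N y (j-1)) for `j = 1, …, s`, then
`|y s - x*| ≤ (⟨M⟩⁻¹ |N|)^s |x⁰ - x*|` componentwise. -/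
theorem inner_iteration_error_bound {n : ℕ} (A M N : Matrix (Fin n) (Fin n) ℝ)
    (f xstar x0 : Fin n → ℝ)
    (hA : IsHpMat A) (hsplit : A = M - N)
    (hcmp : ∀ i j, cmpMat A i j ≤ cmpMat M i j - absMat N i j)
    (hxstar : SolvesLCP A f xstar)
    (s : ℕ) (y : ℕ → Fin n → ℝ) (hy0 : y 0 = x0)
    (hy : ∀ j, 1 ≤ j → j ≤ s →
      SolvesLCP M (fun p => f p + (N *ᵥ y (j - 1)) p) (y j)) :
    ∀ i, |y s i - xstar i| ≤
      ((((cmpMat M)⁻¹ * absMat N) ^ s) *ᵥ fun p => |x0 p - xstar p|) i := by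
  obtain ⟨-, hMdet, hMinv⟩ := hA.1.of_cmpMat_le_sub_absMat hcmp
  have hMdiag : ∀ i, 0 ≤ M i i := fun i =>
    (diag_pos_of_cmpMat_le_sub_absMat hsplit hA.2 hcmp i).le
  subst hy0
  refine le_pow_mulVec_of_le_mulVec (e := fun k => |y k - xstar|)
    (mul_apply_nonneg hMinv fun i j => abs_nonneg (N i j)) fun k hk => ?_
  exact le_inv_mul_mulVec_of_mulVec_le hMdet hMinv
    (cmpMat_mulVec_abs_sub_le hsplit hMdiag hxstar (hy (k + 1) k.succ_pos hk))
end
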